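/- Let ε > 0 and let X : [0,1] → ℝ be nondecreasing and integrable. Then (1/2)·∫₀¹∫₀¹ N_ε(X(z) − X(ζ)) dζ dz = (1/(4ε))·(1 − (2/ε)·∫₀¹ (2z − 1)·X(z) dz). -/

import Mathlib

/-!
For `X` monotone, `|X z - X ζ| = sign (z - ζ) * (X z - X ζ)`, which is `σ (z, ζ) + σ (ζ, z)` for
`σ (z, ζ) = sign (z - ζ) * X z`. The product measure is invariant under swapping the factors, so the
double integral of `|X z - X ζ|` is twice that of `σ`, and integrating `sign (z - ζ)` over
`ζ ∈ [0, 1]` leaves the weight `2 z - 1`. Since the tent kernel is affine in `|x|`, this is the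
whole computation.
-/

open MeasureTheory Real Set

/-- The tent (triangular) potential `N_ε(x) = (1/(2ε))(1 - |x|/ε)`, the singular part of
the decomposition `W_ε = N_ε + S_ε` of the scaled Morse potential. -/
noncomputable def Ntent (ε x : ℝ) : ℝ := (1 / (2 * ε)) * (1 - |x| / ε)

lemma Ntent_eq (ε x : ℝ) : Ntent ε x = (2 * ε)⁻¹ - (2 * ε ^ 2)⁻¹ * |x| := by
  unfold Ntent
  ring

lemma Real.monotone_sign : Monotone Real.sign := by
  intro x y hxy
  unfold Real.sign
  split_ifs <;> grind

lemma MonotoneOn.abs_sub_eq_sign_mul {s : Set ℝ} {X : ℝ → ℝ} (hX : MonotoneOn X s) {x y : ℝ}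
    (hx : x ∈ s) (hy : y ∈ s) : |X x - X y| = Real.sign (x - y) * (X x - X y) := by
  rcases lt_trichotomy x y with h | rfl | h
  · rw [Real.sign_of_neg (sub_neg.2 h), abs_of_nonpos (sub_nonpos.2 (hX hx hy h.le))]
    ring
  · simp
  · rw [Real.sign_of_pos (sub_pos.2 h), abs_of_nonneg (sub_nonneg.2 (hX hy hx h.le))]
    ring

lemma integral_sign_sub (μ : Measure ℝ) [IsFiniteMeasure μ] (z : ℝ) :
    ∫ ζ, Real.sign (z - ζ) ∂μ = μ.real (Iio z) - μ.real (Ioi z) := by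
  have hsign : (fun ζ => Real.sign (z - ζ)) =
      fun ζ => (Iio z).indicator 1 ζ - (Ioi z).indicator 1 ζ := by
    ext ζ
    rcases lt_trichotomy ζ z with h | rfl | h
    · simp [h, h.not_gt, Real.sign_of_pos (sub_pos.2 h)]
    · simp
    · simp [h, h.not_gt, Real.sign_of_neg (sub_neg.2 h)]
  rw [hsign, integral_sub ((integrable_const 1).indicator measurableSet_Iio)
    ((integrable_const 1).indicator measurableSet_Ioi), integral_indicator_one measurableSet_Iio,
    integral_indicator_one measurableSet_Ioi]

lemma setIntegral_Ioc_sign_sub {a b z : ℝ} (hz : z ∈ Icc a b) :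
    ∫ ζ in Ioc a b, Real.sign (z - ζ) = 2 * z - a - b := by
  have hlt : Iio z ∩ Ioc a b = Ioo a z := by
    ext ζ
    simp only [mem_inter_iff, mem_Iio, mem_Ioc, mem_Ioo]
    exact ⟨fun ⟨h₁, h₂, _⟩ => ⟨h₂, h₁⟩, fun ⟨h₁, h₂⟩ => ⟨h₂, h₁, h₂.le.trans hz.2⟩⟩
  rw [integral_sign_sub, measureReal_restrict_apply measurableSet_Iio,
    measureReal_restrict_apply measurableSet_Ioi, hlt, inter_comm, Ioc_inter_Ioi,
    max_eq_right hz.1, volume_real_Ioo_of_le hz.1, volume_real_Ioc_of_le hz.2]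
  ring

section FiniteMeasure

variable {μ : Measure ℝ} [IsFiniteMeasure μ] {X : ℝ → ℝ}

lemma integrable_abs_sub_fst_snd (hX : Integrable X μ) :
    Integrable (fun p : ℝ × ℝ => |X p.1 - X p.2|) (μ.prod μ) :=
  ((hX.comp_fst μ).sub (hX.comp_snd μ)).abs

lemma integral_integral_abs_sub_of_monotoneOn {s : Set ℝ} (hXs : MonotoneOn X s)
    (hs : ∀ᵐ x ∂μ, x ∈ s) (hX : Integrable X μ) :
    ∫ z, ∫ ζ, |X z - X ζ| ∂μ ∂μ = 2 * ∫ z, (∫ ζ, Real.sign (z - ζ) ∂μ) * X z ∂μ := by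
  set σ : ℝ × ℝ → ℝ := fun p => Real.sign (p.1 - p.2) * X p.1 with hσ_def
  have hσ : Integrable σ (μ.prod μ) := by
    refine (hX.comp_fst μ).bdd_mul (c := 1)
      (Real.monotone_sign.measurable.comp (measurable_fst.sub measurable_snd)).aestronglyMeasurable
      (ae_of_all _ fun p => ?_)
    rcases Real.sign_apply_eq (p.1 - p.2) with h | h | h <;> simp [h]
  have hsplit : (fun p : ℝ × ℝ => |X p.1 - X p.2|) =ᵐ[μ.prod μ] fun p => σ p + σ p.swap := by
    filter_upwards [Measure.quasiMeasurePreserving_fst.ae hs,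
      Measure.quasiMeasurePreserving_snd.ae hs] with p h₁ h₂
    show _ = Real.sign (p.1 - p.2) * X p.1 + Real.sign (p.2 - p.1) * X p.2
    rw [← neg_sub p.1, Real.sign_neg, hXs.abs_sub_eq_sign_mul h₁ h₂]
    ring
  calc ∫ z, ∫ ζ, |X z - X ζ| ∂μ ∂μ = ∫ p, |X p.1 - X p.2| ∂(μ.prod μ) :=
        (integral_prod _ (integrable_abs_sub_fst_snd hX)).symm
    _ = ∫ p, σ p ∂(μ.prod μ) + ∫ p, σ p.swap ∂(μ.prod μ) := by
        rw [integral_congr_ae hsplit, integral_add hσ (hσ.swap : Integrable (fun p => σ p.swap) _)]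
    _ = 2 * ∫ p, σ p ∂(μ.prod μ) := by
        rw [integral_prod_swap]
        ring
    _ = 2 * ∫ z, (∫ ζ, Real.sign (z - ζ) ∂μ) * X z ∂μ := by
        rw [integral_prod _ hσ]
        simp only [hσ_def, integral_mul_const]

lemma integral_integral_Ntent_sub [IsProbabilityMeasure μ] (ε : ℝ) (hX : Integrable X μ) :
    ∫ z, ∫ ζ, Ntent ε (X z - X ζ) ∂μ ∂μ =
      (2 * ε)⁻¹ - (2 * ε ^ 2)⁻¹ * ∫ z, ∫ ζ, |X z - X ζ| ∂μ ∂μ := by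
  simp only [Ntent_eq]
  calc ∫ z, ∫ ζ, ((2 * ε)⁻¹ - (2 * ε ^ 2)⁻¹ * |X z - X ζ|) ∂μ ∂μ
      = ∫ z, ((2 * ε)⁻¹ - (2 * ε ^ 2)⁻¹ * ∫ ζ, |X z - X ζ| ∂μ) ∂μ := by
        refine integral_congr_ae (ae_of_all _ fun z => ?_)
        have habs : Integrable (fun ζ => |X z - X ζ|) μ := ((integrable_const _).sub hX).abs
        dsimp only
        rw [integral_sub (integrable_const _) (habs.const_mul _), integral_const,
          integral_const_mul]
        simp
    _ = _ := by
        rw [integral_sub (integrable_const _)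
          ((integrable_abs_sub_fst_snd hX).integral_prod_left.const_mul _),
          integral_const, integral_const_mul]
        simp

end FiniteMeasure

theorem stmt0_general (ε : ℝ) (X : ℝ → ℝ)
    (hmono : MonotoneOn X (Set.Icc 0 1)) :
    (1 / 2) * ∫ z in (0:ℝ)..1, ∫ ζ in (0:ℝ)..1, Ntent ε (X z - X ζ) =
      (1 / (4 * ε)) * (1 - (2 / ε) * ∫ z in (0:ℝ)..1, (2 * z - 1) * X z) := by
  have : IsProbabilityMeasure (volume.restrict (Ioc (0:ℝ) 1)) := ⟨by simp⟩
  have hX : IntegrableOn X (Ioc 0 1) :=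
    (hmono.integrableOn_isCompact isCompact_Icc).mono_set Ioc_subset_Icc_self
  have hmean : ∫ z in Ioc (0:ℝ) 1, (∫ ζ in Ioc (0:ℝ) 1, Real.sign (z - ζ)) * X z =
      ∫ z in Ioc (0:ℝ) 1, (2 * z - 1) * X z :=
    setIntegral_congr_fun measurableSet_Ioc fun z hz => by
      rw [setIntegral_Ioc_sign_sub (Ioc_subset_Icc_self hz), sub_zero]
  simp only [intervalIntegral.integral_of_le zero_le_one]
  rw [integral_integral_Ntent_sub ε hX, integral_integral_abs_sub_of_monotoneOn hmono
    ((ae_restrict_mem measurableSet_Ioc).mono fun _ hx => Ioc_subset_Icc_self hx) hX, hmean]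
  ring

/-- For `ε > 0` and `X : [0,1] → ℝ` nondecreasing and integrable,
`(1/2)∫₀¹∫₀¹ N_ε(X(z) - X(ζ)) dζ dz = (1/(4ε))(1 - (2/ε)∫₀¹ (2z-1) X(z) dz)`. -/
theorem stmt0 (ε : ℝ) (hε : 0 < ε) (X : ℝ → ℝ)
    (hmono : MonotoneOn X (Set.Icc 0 1))
    (hint : MeasureTheory.IntegrableOn X (Set.Icc 0 1)) :
    (1 / 2) * ∫ z in (0:ℝ)..1, ∫ ζ in (0:ℝ)..1, Ntent ε (X z - X ζ) =
      (1 / (4 * ε)) * (1 - (2 / ε) * ∫ z in (0:ℝ)..1, (2 * z - 1) * X z) :=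
  stmt0_general ε X hmono
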